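/- (Theorem 1, convergence) Let n ≥ n', let A be a real symmetric n×n matrix, A' a real symmetric n'×n' matrix, K a real n×n' matrix, λ ≥ 0, α ∈ (0,1], and ε ∈ (0,1) with ‖A‖₂·‖A'‖₂ < ε. Then for any initial real n×n' matrix X⁽⁰⁾, the sequence defined by X⁽ᵗ⁺¹⁾ = (1−α)X⁽ᵗ⁾ + α·P_d(A X⁽ᵗ⁾ A' + λK) converges (in Frobenius norm) to a limit X*. -/

import Mathlib

/-- The Frobenius norm of a real matrix. -/
noncomputable def frobNorm {m p : Type*} [Fintype m] [Fintype p] (A : Matrix m p ℝ) : ℝ :=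
  Real.sqrt (∑ i, ∑ j, (A i j) ^ 2)

/-- The spectral (ℓ₂ operator) norm of a real square matrix. -/
noncomputable def specNorm {m : Type*} [Fintype m] [DecidableEq m] (A : Matrix m m ℝ) : ℝ :=
  ‖Matrix.toEuclideanCLM (𝕜 := ℝ) A‖

/-- `Omega n n'` is the set of partial doubly stochastic matrices: real `n × n'` matrices
with row sums at most 1, column sums equal to 1, and nonnegative entries. -/
def Omega (n n' : ℕ) : Set (Matrix (Fin n) (Fin n') ℝ) :=
  {X | (∀ i, ∑ j, X i j ≤ 1) ∧ (∀ j, ∑ i, X i j = 1) ∧ (∀ i j, 0 ≤ X i j)}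

/-!
A metric projection onto a convex set in an inner product space is `1`-Lipschitz, and
`‖B N C‖_F ≤ ‖B‖₂ ‖C‖₂ ‖N‖_F`. Hence, in the Frobenius norm, `Y ↦ P_d (A Y A' + λK)` is
`ε`-Lipschitz and the relaxed step `Y ↦ (1 - α) Y + α P_d (A Y A' + λK)` is a contraction with
constant `1 - α + α ε < 1`; Banach's fixed point theorem gives the limit.
-/

open Filter Topology
open scoped RealInnerProductSpace Matrix

section MetricProjection

variable {E : Type*} [NormedAddCommGroup E] [InnerProductSpace ℝ E]

def IsMetricProjection (S : Set E) (P : E → E) : Prop :=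
  ∀ y, P y ∈ S ∧ ∀ d ∈ S, ‖y - P y‖ ≤ ‖y - d‖

variable {S : Set E} {P : E → E}

lemma IsMetricProjection.inner_sub_le_zero (hS : Convex ℝ S) (hP : IsMetricProjection S P)
    (y : E) {w : E} (hw : w ∈ S) : ⟪y - P y, w - P y⟫ ≤ 0 := by
  have : Nonempty S := ⟨⟨w, hw⟩⟩
  refine (norm_eq_iInf_iff_real_inner_le_zero hS (hP y).1).mp ?_ w hw
  refine le_antisymm (le_ciInf fun d => (hP y).2 d d.2) ?_
  exact ciInf_le ⟨0, by rintro _ ⟨d, rfl⟩; exact norm_nonneg (y - d)⟩ (⟨P y, (hP y).1⟩ : S)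

lemma IsMetricProjection.norm_sub_le (hS : Convex ℝ S) (hP : IsMetricProjection S P)
    (y₁ y₂ : E) : ‖P y₁ - P y₂‖ ≤ ‖y₁ - y₂‖ := by
  have h₁ := hP.inner_sub_le_zero hS y₁ (hP y₂).1
  have h₂ := hP.inner_sub_le_zero hS y₂ (hP y₁).1
  -- Adding the two variational inequalities gives `‖P y₁ - P y₂‖² ≤ ⟪y₁ - y₂, P y₁ - P y₂⟫`.
  have key : ‖P y₁ - P y₂‖ * ‖P y₁ - P y₂‖ ≤ ⟪y₁ - y₂, P y₁ - P y₂⟫ := by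
    rw [← real_inner_self_eq_norm_mul_norm]
    have : ⟪y₁ - y₂, P y₁ - P y₂⟫ - ⟪P y₁ - P y₂, P y₁ - P y₂⟫
        = -⟪y₁ - P y₁, P y₂ - P y₁⟫ - ⟪y₂ - P y₂, P y₁ - P y₂⟫ := by
      simp only [inner_sub_left, inner_sub_right, real_inner_comm]
      ring
    linarith
  nlinarith [real_inner_le_norm (y₁ - y₂) (P y₁ - P y₂), norm_nonneg (P y₁ - P y₂),
    norm_nonneg (y₁ - y₂)]

end MetricProjection

lemma norm_relaxed_sub_le {E : Type*} [SeminormedAddCommGroup E] [NormedSpace ℝ E]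
    {G : E → E} {α ε : ℝ} (hα : α ∈ Set.Icc (0 : ℝ) 1)
    (hG : ∀ x y, ‖G x - G y‖ ≤ ε * ‖x - y‖) (x y : E) :
    ‖((1 - α) • x + α • G x) - ((1 - α) • y + α • G y)‖ ≤ (1 - α + α * ε) * ‖x - y‖ := by
  obtain ⟨hα₀, hα₁⟩ := hα
  calc ‖((1 - α) • x + α • G x) - ((1 - α) • y + α • G y)‖
      = ‖(1 - α) • (x - y) + α • (G x - G y)‖ := by
        rw [smul_sub, smul_sub, add_sub_add_comm]
    _ ≤ (1 - α) * ‖x - y‖ + α * ‖G x - G y‖ := by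
        refine (norm_add_le _ _).trans_eq ?_
        rw [norm_smul, norm_smul, Real.norm_of_nonneg (sub_nonneg.2 hα₁), Real.norm_of_nonneg hα₀]
    _ ≤ (1 - α) * ‖x - y‖ + α * (ε * ‖x - y‖) := by gcongr; exact hG x y
    _ = (1 - α + α * ε) * ‖x - y‖ := by ring

lemma exists_tendsto_of_norm_sub_le_mul {E : Type*} [NormedAddCommGroup E] [CompleteSpace E]
    {f : E → E} {ρ : ℝ} (hρ₀ : 0 ≤ ρ) (hρ₁ : ρ < 1) (hf : ∀ x y, ‖f x - f y‖ ≤ ρ * ‖x - y‖)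
    (x : ℕ → E) (hx : ∀ t, x (t + 1) = f (x t)) : ∃ x₀, Tendsto x atTop (𝓝 x₀) := by
  have hcontr : ContractingWith ⟨ρ, hρ₀⟩ f :=
    ⟨by exact_mod_cast hρ₁, LipschitzWith.of_dist_le_mul fun y z => by
      rw [dist_eq_norm, dist_eq_norm]; exact hf y z⟩
  have hiter : x = fun t => f^[t] (x 0) := by
    funext t
    induction t with
    | zero => rfl
    | succ t ih => rw [hx, ih, Function.iterate_succ_apply']
  rw [hiter]
  exact ⟨_, hcontr.tendsto_iterate_fixedPoint (x 0)⟩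

section Frobenius

variable {m p : Type*} [Fintype m] [Fintype p]

noncomputable def frobEquiv : Matrix m p ℝ ≃ₗ[ℝ] EuclideanSpace ℝ (m × p) :=
  (LinearEquiv.curry ℝ ℝ m p).symm.trans (WithLp.linearEquiv 2 ℝ (m × p → ℝ)).symm

lemma frobNorm_eq_norm_frobEquiv (M : Matrix m p ℝ) : frobNorm M = ‖frobEquiv M‖ := by
  rw [EuclideanSpace.norm_eq, frobNorm, Fintype.sum_prod_type]
  simp only [Real.norm_eq_abs, sq_abs]
  rfl

lemma sq_frobNorm_eq_sum_col (M : Matrix m p ℝ) :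
    frobNorm M ^ 2 = ∑ j, ‖WithLp.toLp 2 (Mᵀ j)‖ ^ 2 := by
  rw [frobNorm, Real.sq_sqrt (by positivity), Finset.sum_comm]
  simp only [EuclideanSpace.norm_sq_eq, Real.norm_eq_abs, sq_abs]
  rfl

lemma frobNorm_transpose (M : Matrix m p ℝ) : frobNorm Mᵀ = frobNorm M := by
  rw [frobNorm, frobNorm, Finset.sum_comm]
  rfl

lemma specNorm_transpose [DecidableEq m] (B : Matrix m m ℝ) : specNorm Bᵀ = specNorm B := by
  open scoped Matrix.Norms.L2Operator in
  rw [specNorm, specNorm, Matrix.l2_opNorm_toEuclideanCLM, Matrix.l2_opNorm_toEuclideanCLM,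
    ← Matrix.conjTranspose_eq_transpose_of_trivial, Matrix.l2_opNorm_conjTranspose]

lemma frobNorm_mul_le [DecidableEq m] (B : Matrix m m ℝ) (N : Matrix m p ℝ) :
    frobNorm (B * N) ≤ specNorm B * frobNorm N := by
  refine le_of_pow_le_pow_left₀ two_ne_zero (by unfold specNorm frobNorm; positivity) ?_
  rw [mul_pow, sq_frobNorm_eq_sum_col, sq_frobNorm_eq_sum_col, Finset.mul_sum]
  refine Finset.sum_le_sum fun j _ => ?_
  have hcol : WithLp.toLp 2 ((B * N)ᵀ j)
      = Matrix.toEuclideanCLM (𝕜 := ℝ) B (WithLp.toLp 2 (Nᵀ j)) := by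
    rw [Matrix.toEuclideanCLM_toLp]
    rfl
  rw [hcol, ← mul_pow]
  exact pow_le_pow_left₀ (norm_nonneg _) ((Matrix.toEuclideanCLM (𝕜 := ℝ) B).le_opNorm _) 2

lemma frobNorm_mul_mul_le [DecidableEq m] [DecidableEq p] (B : Matrix m m ℝ) (N : Matrix m p ℝ)
    (C : Matrix p p ℝ) : frobNorm (B * N * C) ≤ specNorm B * specNorm C * frobNorm N := by
  have hC : frobNorm (N * C) ≤ specNorm C * frobNorm N := by
    simpa only [← frobNorm_transpose (N * C), Matrix.transpose_mul, specNorm_transpose,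
      frobNorm_transpose] using frobNorm_mul_le Cᵀ Nᵀ
  calc frobNorm (B * N * C) ≤ specNorm B * frobNorm (N * C) := by
        rw [Matrix.mul_assoc]; exact frobNorm_mul_le B (N * C)
    _ ≤ specNorm B * (specNorm C * frobNorm N) := by gcongr; exact norm_nonneg _
    _ = specNorm B * specNorm C * frobNorm N := by ring

lemma Convex.frobNorm_proj_sub_proj_le {S : Set (Matrix m p ℝ)} (hS : Convex ℝ S)
    {Pd : Matrix m p ℝ → Matrix m p ℝ} (hmem : ∀ Y, Pd Y ∈ S)
    (hmin : ∀ Y, ∀ D ∈ S, frobNorm (Y - Pd Y) ≤ frobNorm (Y - D)) (Y Z : Matrix m p ℝ) :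
    frobNorm (Pd Y - Pd Z) ≤ frobNorm (Y - Z) := by
  have hP : IsMetricProjection (frobEquiv '' S) (frobEquiv ∘ Pd ∘ frobEquiv.symm) := by
    refine fun y => ⟨⟨_, hmem _, rfl⟩, ?_⟩
    rintro _ ⟨D, hD, rfl⟩
    simpa only [frobNorm_eq_norm_frobEquiv, map_sub, LinearEquiv.apply_symm_apply,
      Function.comp_apply] using hmin (frobEquiv.symm y) D hD
  simpa only [frobNorm_eq_norm_frobEquiv, map_sub, Function.comp_apply,
    LinearEquiv.symm_apply_apply] using
    hP.norm_sub_le (hS.linear_image frobEquiv.toLinearMap) (frobEquiv Y) (frobEquiv Z)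

end Frobenius

lemma convex_Omega (n n' : ℕ) : Convex ℝ (Omega n n') := by
  rintro Y ⟨hY₁, hY₂, hY₃⟩ Z ⟨hZ₁, hZ₂, hZ₃⟩ a b ha hb hab
  have hrow : ∀ i, ∑ j, (a • Y + b • Z) i j = a * ∑ j, Y i j + b * ∑ j, Z i j := fun i => by
    simp only [Matrix.add_apply, Matrix.smul_apply, smul_eq_mul, Finset.sum_add_distrib,
      Finset.mul_sum]
  have hcol : ∀ j, ∑ i, (a • Y + b • Z) i j = a * ∑ i, Y i j + b * ∑ i, Z i j := fun j => by
    simp only [Matrix.add_apply, Matrix.smul_apply, smul_eq_mul, Finset.sum_add_distrib,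
      Finset.mul_sum]
  refine ⟨fun i => ?_, fun j => ?_, fun i j => ?_⟩
  · rw [hrow, ← hab]
    nlinarith [hY₁ i, hZ₁ i]
  · rw [hcol, hY₂, hZ₂, mul_one, mul_one, hab]
  · simp only [Matrix.add_apply, Matrix.smul_apply, smul_eq_mul]
    exact add_nonneg (mul_nonneg ha (hY₃ i j)) (mul_nonneg hb (hZ₃ i j))

theorem fastPFP_converges_general (n n' : ℕ)
    (A : Matrix (Fin n) (Fin n) ℝ)
    (A' : Matrix (Fin n') (Fin n') ℝ)
    (K : Matrix (Fin n) (Fin n') ℝ) (lam : ℝ)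
    (α : ℝ) (hα : α ∈ Set.Ioc (0 : ℝ) 1) (ε : ℝ) (hε : ε ∈ Set.Ioo (0 : ℝ) 1)
    (hspec : specNorm A * specNorm A' < ε)
    (Pd : Matrix (Fin n) (Fin n') ℝ → Matrix (Fin n) (Fin n') ℝ)
    (hPd_mem : ∀ Y, Pd Y ∈ Omega n n')
    (hPd_min : ∀ Y, ∀ D ∈ Omega n n', frobNorm (Y - Pd Y) ≤ frobNorm (Y - D))
    (X : ℕ → Matrix (Fin n) (Fin n') ℝ)
    (hX : ∀ t, X (t + 1) = (1 - α) • X t + α • Pd (A * X t * A' + lam • K)) :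
    ∃ Xstar : Matrix (Fin n) (Fin n') ℝ,
      Filter.Tendsto (fun t => frobNorm (X t - Xstar)) Filter.atTop (nhds 0) := by
  obtain ⟨hα₀, hα₁⟩ := hα
  obtain ⟨hε₀, hε₁⟩ := hε
  let G (y : EuclideanSpace ℝ (Fin n × Fin n')) :=
    frobEquiv (Pd (A * frobEquiv.symm y * A' + lam • K))
  have hG (y z) : ‖G y - G z‖ ≤ ε * ‖y - z‖ := calc
    ‖G y - G z‖ = frobNorm (Pd (A * frobEquiv.symm y * A' + lam • K)
        - Pd (A * frobEquiv.symm z * A' + lam • K)) := by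
      rw [frobNorm_eq_norm_frobEquiv, map_sub]
    _ ≤ frobNorm (A * (frobEquiv.symm y - frobEquiv.symm z) * A') := by
      refine ((convex_Omega n n').frobNorm_proj_sub_proj_le hPd_mem hPd_min _ _).trans_eq ?_
      rw [add_sub_add_right_eq_sub, Matrix.mul_sub, Matrix.sub_mul]
    _ ≤ specNorm A * specNorm A' * frobNorm (frobEquiv.symm y - frobEquiv.symm z) :=
      frobNorm_mul_mul_le _ _ _
    _ ≤ ε * ‖y - z‖ := by
      rw [frobNorm_eq_norm_frobEquiv, ← map_sub, LinearEquiv.apply_symm_apply]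
      gcongr
  have hρ₀ : 0 ≤ 1 - α + α * ε := by nlinarith
  have hρ₁ : 1 - α + α * ε < 1 := by nlinarith
  obtain ⟨x₀, hx₀⟩ := exists_tendsto_of_norm_sub_le_mul hρ₀ hρ₁
    (norm_relaxed_sub_le ⟨hα₀.le, hα₁⟩ hG) (fun t => frobEquiv (X t)) fun t => by
      simp only [hX, map_add, map_smul, G, LinearEquiv.symm_apply_apply]
  refine ⟨frobEquiv.symm x₀, ?_⟩
  simpa only [frobNorm_eq_norm_frobEquiv, map_sub, LinearEquiv.apply_symm_apply] using
    tendsto_iff_norm_sub_tendsto_zero.mp hx₀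

/-- (Theorem 1, convergence) With `α ∈ (0,1]`, `ε ∈ (0,1)` and `‖A‖₂·‖A'‖₂ < ε`, the FastPFP
iterates `X⁽ᵗ⁺¹⁾ = (1−α)X⁽ᵗ⁾ + α·P_d(A X⁽ᵗ⁾ A' + λK)` converge in Frobenius norm to some
limit `X*`, for any initial matrix `X⁽⁰⁾`. -/
theorem fastPFP_converges (n n' : ℕ) (hn' : 0 < n') (hnn : n' ≤ n)
    (A : Matrix (Fin n) (Fin n) ℝ) (hA : A.IsSymm)
    (A' : Matrix (Fin n') (Fin n') ℝ) (hA' : A'.IsSymm)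
    (K : Matrix (Fin n) (Fin n') ℝ) (lam : ℝ) (hlam : 0 ≤ lam)
    (α : ℝ) (hα : α ∈ Set.Ioc (0 : ℝ) 1) (ε : ℝ) (hε : ε ∈ Set.Ioo (0 : ℝ) 1)
    (hspec : specNorm A * specNorm A' < ε)
    (Pd : Matrix (Fin n) (Fin n') ℝ → Matrix (Fin n) (Fin n') ℝ)
    (hPd_mem : ∀ Y, Pd Y ∈ Omega n n')
    (hPd_min : ∀ Y, ∀ D ∈ Omega n n', frobNorm (Y - Pd Y) ≤ frobNorm (Y - D))
    (X : ℕ → Matrix (Fin n) (Fin n') ℝ)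
    (hX : ∀ t, X (t + 1) = (1 - α) • X t + α • Pd (A * X t * A' + lam • K)) :
    ∃ Xstar : Matrix (Fin n) (Fin n') ℝ,
      Filter.Tendsto (fun t => frobNorm (X t - Xstar)) Filter.atTop (nhds 0) :=
  fastPFP_converges_general n n' A A' K lam α hα ε hε hspec Pd hPd_mem hPd_min X hX
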